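/- If G is a connected graph of diameter 2 and H is any graph, then χ_ρ(G∘H) = |V(G)|·|V(H)| − α(G)·α(H) + 1. -/

import Mathlib

/-!
Two distinct vertices of `G ∘ H` with the same first coordinate are joined through any
neighbour of that coordinate in `G`, and a `G`-walk between different first coordinates lifts to
a walk of the same length; so when `G` is connected of diameter two, any two distinct vertices
of `G ∘ H` are at distance one or two. In a packing colouring of such a graph, colour `1` is an
independent set and every other colour is used at most once, while colouring a maximum
independent set by `1` and all other vertices by distinct colours is a packing colouring; hence
`χ_ρ = |V| - α + 1`. Finally `α(G ∘ H) = α(G) α(H)`, since an independent set of `G ∘ H`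
projects onto an independent set of `G` and its fibres are independent in `H`.
-/

open SimpleGraph

/-- The lexicographic product of simple graphs. -/
def SimpleGraph.lexProd {α β : Type*} (G : SimpleGraph α) (H : SimpleGraph β) :
    SimpleGraph (α × β) where
  Adj x y := G.Adj x.1 y.1 ∨ (x.1 = y.1 ∧ H.Adj x.2 y.2)
  symm := ⟨by
    rintro ⟨g1, h1⟩ ⟨g2, h2⟩ (h | ⟨rfl, h⟩)
    · exact Or.inl h.symm
    · exact Or.inr ⟨rfl, h.symm⟩⟩
  loopless := ⟨by
    rintro ⟨g, h⟩ (h' | ⟨-, h'⟩)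
    · exact G.loopless.irrefl g h'
    · exact H.loopless.irrefl h h'⟩

/-- A set of vertices is independent if its vertices are pairwise non-adjacent. -/
def SimpleGraph.IndepSet {α : Type*} (G : SimpleGraph α) (s : Set α) : Prop :=
  ∀ u ∈ s, ∀ v ∈ s, u ≠ v → ¬ G.Adj u v

/-- The independence number: the largest cardinality of an independent set. -/
noncomputable def SimpleGraph.indepNumFin {α : Type*} [Fintype α] (G : SimpleGraph α) : ℕ :=
  sSup {n | ∃ s : Finset α, G.IndepSet ↑s ∧ s.card = n}

/-- An `i`-packing: a set of vertices pairwise at distance greater than `i`. -/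
def SimpleGraph.IsPacking {α : Type*} (G : SimpleGraph α) (i : ℕ) (s : Set α) : Prop :=
  ∀ u ∈ s, ∀ v ∈ s, u ≠ v → i < G.dist u v

/-- The `i`-packing number: the largest cardinality of an `i`-packing. -/
noncomputable def SimpleGraph.packingNum {α : Type*} [Fintype α] (G : SimpleGraph α)
    (i : ℕ) : ℕ :=
  sSup {n | ∃ s : Finset α, G.IsPacking i ↑s ∧ s.card = n}

/-- A `k`-packing coloring: colors in `{1, …, k}`, and any two distinct vertices sharing
color `i` are at distance greater than `i`. -/
def SimpleGraph.IsPackingColoring {α : Type*} (G : SimpleGraph α) (k : ℕ) (c : α → ℕ) :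
    Prop :=
  (∀ v, c v ∈ Finset.Icc 1 k) ∧ ∀ u v, u ≠ v → c u = c v → c u < G.dist u v

/-- The packing chromatic number: the least `k` admitting a `k`-packing coloring. -/
noncomputable def SimpleGraph.packingChromatic {α : Type*} (G : SimpleGraph α) : ℕ :=
  sInf {k | ∃ c : α → ℕ, G.IsPackingColoring k c}

/-- `d(G) = 1` if `G` is complete, and `diam(G) - 1` otherwise. -/
noncomputable def SimpleGraph.dval {α : Type*} [Fintype α] (G : SimpleGraph α) : ℕ :=
  letI := Classical.dec (G = (⊤ : SimpleGraph α))
  if G = (⊤ : SimpleGraph α) then 1 else G.diam - 1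

open Finset

namespace SimpleGraph

variable {α β V : Type*}

theorem indepNumFin_eq_indepNum [Fintype α] (G : SimpleGraph α) :
    G.indepNumFin = G.indepNum := by
  simp only [indepNumFin, indepNum, isNIndepSet_iff]
  rfl

section LexProd

variable {G : SimpleGraph α} {H : SimpleGraph β}

variable (G H) in
def lexProdLeft (b : β) : G →g G.lexProd H where
  toFun a := (a, b)
  map_rel' h := Or.inl h

theorem IsIndepSet.image_fst_of_lexProd {s : Set (α × β)} (hs : (G.lexProd H).IsIndepSet s) :
    G.IsIndepSet (Prod.fst '' s) := by
  rintro _ ⟨x, hx, rfl⟩ _ ⟨y, hy, rfl⟩ hne hadj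
  exact hs hx hy (fun h => hne (congrArg Prod.fst h)) (Or.inl hadj)

theorem IsIndepSet.image_snd_fiber_of_lexProd {s : Set (α × β)}
    (hs : (G.lexProd H).IsIndepSet s) (a : α) :
    H.IsIndepSet (Prod.snd '' {x ∈ s | x.1 = a}) := by
  rintro _ ⟨x, ⟨hx, hxa⟩, rfl⟩ _ ⟨y, ⟨hy, hya⟩, rfl⟩ hne hadj
  exact hs hx hy (fun h => hne (congrArg Prod.snd h)) (Or.inr ⟨hxa.trans hya.symm, hadj⟩)

theorem IsIndepSet.prod_lexProd {s : Set α} {t : Set β} (hs : G.IsIndepSet s)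
    (ht : H.IsIndepSet t) : (G.lexProd H).IsIndepSet (s ×ˢ t) := by
  rintro ⟨a, b⟩ ⟨ha, hb⟩ ⟨a', b'⟩ ⟨ha', hb'⟩ hne (hadj | ⟨rfl, hadj⟩)
  · exact hs ha ha' hadj.ne hadj
  · exact ht hb hb' (by rintro rfl; exact hne rfl) hadj

theorem indepNum_lexProd [Fintype α] [Fintype β] :
    (G.lexProd H).indepNum = G.indepNum * H.indepNum := by
  classical
  refine le_antisymm ?_ ?_
  · obtain ⟨U, hU, hUcard⟩ := (G.lexProd H).exists_isNIndepSet_indepNum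
    have hfibre (a : α) : #{x ∈ U | x.1 = a} ≤ H.indepNum := by
      rw [← card_image_of_injOn fun x hx y hy hxy =>
        Prod.ext ((mem_filter.1 hx).2.trans (mem_filter.1 hy).2.symm) hxy]
      exact IsIndepSet.card_le_indepNum (by simpa using hU.image_snd_fiber_of_lexProd a)
    calc (G.lexProd H).indepNum = #U := hUcard.symm
      _ ≤ H.indepNum * #(U.image Prod.fst) := card_le_mul_card_image U _ fun a _ => hfibre a
      _ ≤ H.indepNum * G.indepNum := by
        gcongr
        exact IsIndepSet.card_le_indepNum (by simpa using hU.image_fst_of_lexProd)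
      _ = G.indepNum * H.indepNum := mul_comm _ _
  · obtain ⟨s, hs, hscard⟩ := G.exists_isNIndepSet_indepNum
    obtain ⟨t, ht, htcard⟩ := H.exists_isNIndepSet_indepNum
    rw [← hscard, ← htcard, ← card_product]
    exact IsIndepSet.card_le_indepNum (by simpa using hs.prod_lexProd ht)

theorem Preconnected.exists_lexProd_walk_length_le [Nontrivial α] (hG : G.Preconnected)
    (u v : α × β) : ∃ w : (G.lexProd H).Walk u v, w.length ≤ max 2 (G.dist u.1 v.1) := by
  obtain ⟨a, x⟩ := u
  obtain ⟨b, y⟩ := v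
  by_cases hab : a = b
  · subst hab
    obtain ⟨a', h⟩ := hG.exists_adj_of_nontrivial a
    exact ⟨.cons (v := (a', x)) (Or.inl h) (.cons (Or.inl h.symm) .nil), le_max_left 2 _⟩
  · obtain ⟨p, hp⟩ := (hG a b).exists_walk_length_eq_dist
    cases p with
    | nil => exact absurd rfl hab
    | cons h q =>
      refine ⟨.cons (Or.inl h) (q.map (G.lexProdLeft H y)), ?_⟩
      change (q.map _).length + 1 ≤ _
      rw [Walk.length_map]
      exact hp.le.trans (le_max_right 2 _)

theorem Connected.lexProd [Nontrivial α] [Nonempty β] (hG : G.Connected) :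
    (G.lexProd H).Connected where
  preconnected u v := (hG.preconnected.exists_lexProd_walk_length_le u v).elim fun w _ => ⟨w⟩

theorem Preconnected.dist_lexProd_le [Nontrivial α] (hG : G.Preconnected) (u v : α × β) :
    (G.lexProd H).dist u v ≤ max 2 (G.dist u.1 v.1) :=
  (hG.exists_lexProd_walk_length_le u v).elim fun w hw => (dist_le w).trans hw

end LexProd

section Packing

variable {X : SimpleGraph V} {k : ℕ} {c : V → ℕ}

theorem IsPackingColoring.isIndepSet_setOf_eq_one (hc : X.IsPackingColoring k c) :
    X.IsIndepSet {v | c v = 1} := by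
  intro u hu v hv huv hadj
  have := hc.2 u v huv (hu.trans hv.symm)
  rw [hu, dist_eq_one_iff_adj.mpr hadj] at this
  exact lt_irrefl _ this

theorem IsPackingColoring.injOn_of_dist_le_two (hc : X.IsPackingColoring k c)
    (h2 : ∀ u v, X.dist u v ≤ 2) : Set.InjOn c {v | c v ≠ 1} := by
  intro u hu v _ huv
  by_contra hne
  have hlt : c u < X.dist u v := hc.2 u v hne huv
  have hpos : 1 ≤ c u := (mem_Icc.1 (hc.1 u)).1
  have hu' : c u ≠ 1 := hu
  have := h2 u v
  omega

theorem IsPackingColoring.card_sub_indepNum_add_one_le [Fintype V] [Nonempty V]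
    (hc : X.IsPackingColoring k c) (h2 : ∀ u v, X.dist u v ≤ 2) :
    Fintype.card V - X.indepNum + 1 ≤ k := by
  classical
  have hone : #{v | c v = 1} ≤ X.indepNum :=
    IsIndepSet.card_le_indepNum (by simpa using hc.isIndepSet_setOf_eq_one)
  have hrest : #{v | ¬c v = 1} ≤ k - 1 := by
    calc #{v | ¬c v = 1} ≤ #(Icc 2 k) := by
          refine card_le_card_of_injOn c (fun v hv => ?_) fun u hu v hv => ?_
          · have := mem_Icc.1 (hc.1 v)
            have := (mem_filter.1 hv).2
            rw [mem_coe, mem_Icc]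
            omega
          · exact hc.injOn_of_dist_le_two h2 (mem_filter.1 hu).2 (mem_filter.1 hv).2
      _ = k - 1 := by simp
  have hk := mem_Icc.1 (hc.1 (Classical.arbitrary V))
  have := card_filter_add_card_filter_not (s := univ) fun v => c v = 1
  rw [card_univ] at this
  omega

theorem Preconnected.exists_isPackingColoring [Fintype V] (hX : X.Preconnected) :
    ∃ c, X.IsPackingColoring (Fintype.card V - X.indepNum + 1) c := by
  classical
  obtain ⟨U, hU, hUcard⟩ := X.exists_isNIndepSet_indepNum
  let e := Uᶜ.equivFin
  have hcompl : #Uᶜ = Fintype.card V - X.indepNum := by rw [card_compl, hUcard]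
  refine ⟨fun v => if hv : v ∈ U then 1 else e ⟨v, mem_compl.2 hv⟩ + 2, fun v => ?_,
    fun u v huv hcol => ?_⟩
  · dsimp only
    rw [mem_Icc]
    split_ifs with hv
    · omega
    · have := (e ⟨v, mem_compl.2 hv⟩).isLt
      omega
  · by_cases hu : u ∈ U <;> by_cases hv : v ∈ U <;>
      simp only [hu, hv, dite_true, dite_false] at hcol ⊢
    · exact (hX u v).one_lt_dist_of_ne_of_not_adj huv (hU hu hv huv)
    · omega
    · omega
    · have : e ⟨u, mem_compl.2 hu⟩ = e ⟨v, mem_compl.2 hv⟩ := Fin.ext (by omega)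
      exact absurd (congrArg Subtype.val (e.injective this)) huv

theorem packingChromatic_eq_card_sub_indepNum_add_one [Fintype V] (hX : X.Connected)
    (h2 : ∀ u v, X.dist u v ≤ 2) : X.packingChromatic = Fintype.card V - X.indepNum + 1 := by
  have := hX.nonempty
  obtain ⟨c, hc⟩ := hX.preconnected.exists_isPackingColoring
  exact le_antisymm (Nat.sInf_le ⟨c, hc⟩)
    (le_csInf ⟨_, c, hc⟩ fun k ⟨_, hc⟩ => hc.card_sub_indepNum_add_one_le h2)

end Packing

end SimpleGraph

theorem packingChromatic_lexProd_diam_two {α β : Type*} [Fintype α] [Fintype β]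
    [Nonempty β] (G : SimpleGraph α) (H : SimpleGraph β)
    (hG : G.Connected) (hd : G.diam = 2) :
    (G.lexProd H).packingChromatic
      = Fintype.card α * Fintype.card β - G.indepNumFin * H.indepNumFin + 1 := by
  have : Nontrivial α := G.nontrivial_of_diam_ne_zero (by omega)
  have hG2 (a b : α) : G.dist a b ≤ 2 :=
    hd ▸ dist_le_diam (G.ediam_ne_top_of_diam_ne_zero (by omega))
  rw [packingChromatic_eq_card_sub_indepNum_add_one hG.lexProd
      fun u v => (hG.preconnected.dist_lexProd_le u v).trans (max_le le_rfl (hG2 _ _)),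
    Fintype.card_prod, indepNumFin_eq_indepNum, indepNumFin_eq_indepNum, indepNum_lexProd]
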